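/- (Uniformity of up to t colluders' shares.) Let p be a prime and F = ZMod p. Let α : Fin (l+t) → F be injective and let γ : Fin k → F be injective with k ≤ t and range disjoint from the range of α. Fix data segments s : Fin l → (Fin r → F). For noise segments n : Fin t → (Fin r → F), let x_{s,n} be the segment family whose first l entries are s and last t entries are n. Then the pushforward of the uniform probability mass function on Fin t → (Fin r → F) under the map n ↦ (f_{x_{s,n}}(γ j))_{j ∈ Fin k} is the uniform probability mass function on Fin k → (Fin r → F). In particular, this distribution of the k encoded shares does not depend on the data segments s. -/
import Mathlib

/-- Lagrange encoding of a segment family `x : Fin N → (Fin r → F)` at point `γ`. -/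
noncomputable def enc {F : Type*} [Field F] {N r : ℕ} (α : Fin N → F)
    (x : Fin N → Fin r → F) (γ : F) : Fin r → F :=
  ∑ o, (∏ o' ∈ Finset.univ.erase o, (γ - α o') / (α o - α o')) • x o

lemma enc_eq_eval {F : Type*} [Field F] {N r : ℕ} (α : Fin N → F)
    (x : Fin N → Fin r → F) (γ : F) (i : Fin r) :
    enc α x γ i = (Lagrange.interpolate Finset.univ α fun o => x o i).eval γ := by
  simp only [enc, Lagrange.interpolate_apply, Polynomial.eval_finset_sum,
    Finset.sum_apply, Pi.smul_apply, smul_eq_mul, Polynomial.eval_mul, Polynomial.eval_C,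
    Lagrange.basis, Polynomial.eval_prod, Lagrange.basisDivisor, Polynomial.eval_sub,
    Polynomial.eval_X]
  refine Finset.sum_congr rfl fun o _ => ?_
  rw [mul_comm]
  congr 1
  refine Finset.prod_congr rfl fun o' _ => ?_
  rw [div_eq_inv_mul]

lemma enc_sub_add {F : Type*} [Field F] {N r : ℕ} (α : Fin N → F)
    (x y z : Fin N → Fin r → F) (γ : F) :
    enc α (x - y + z) γ = enc α x γ - enc α y γ + enc α z γ := by
  simp only [enc, Pi.add_apply, Pi.sub_apply, smul_add, smul_sub,
    Finset.sum_add_distrib, Finset.sum_sub_distrib]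

lemma pmf_map_uniform_of_card_fiber_eq {A B : Type*} [Fintype A] [Fintype B]
    [Nonempty A] [Nonempty B] [DecidableEq B] (f : A → B)
    (h : ∀ b b' : B, (Finset.univ.filter fun a => f a = b).card
        = (Finset.univ.filter fun a => f a = b').card) :
    (PMF.uniformOfFintype A).map f = PMF.uniformOfFintype B := by
  ext b
  rw [PMF.map_apply, PMF.uniformOfFintype_apply, tsum_fintype]
  simp only [PMF.uniformOfFintype_apply]
  rw [← Finset.sum_filter, Finset.sum_const, nsmul_eq_mul]
  set m := (Finset.univ.filter fun a => f a = b).card with hm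
  have hfilter : (Finset.univ.filter fun a => b = f a)
      = (Finset.univ.filter fun a => f a = b) := by
    apply Finset.filter_congr; intro a _; simp [eq_comm]
  rw [hfilter, ← hm]
  have hcardA : Fintype.card A = Fintype.card B * m := by
    rw [← Finset.card_univ,
      Finset.card_eq_sum_card_fiberwise (t := (Finset.univ : Finset B)) (f := f)
        (fun a _ => Finset.mem_univ _),
      Finset.sum_congr rfl fun b' _ => h b' b, Finset.sum_const, Finset.card_univ, smul_eq_mul]
  have hm0 : m ≠ 0 := by
    intro h0
    have : Fintype.card A = 0 := by rw [hcardA, h0, mul_zero]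
    exact Fintype.card_ne_zero this
  rw [hcardA]
  push_cast
  rw [ENNReal.mul_inv (by simp [Fintype.card_ne_zero]) (by simp),
    ← mul_assoc, mul_comm (m : ENNReal), mul_assoc,
    ENNReal.mul_inv_cancel (by exact_mod_cast hm0) (by simp), mul_one]

/-- Uniformity of up to `t` colluders' shares: pushing the uniform distribution on the noise
segments forward through the encoding map yields the uniform distribution on the `k` shares,
independently of the data segments `s`. -/
theorem colluder_shares_uniform
    {p : ℕ} [Fact p.Prime] {l t r k : ℕ}
    (hl : 1 ≤ l) (ht : 1 ≤ t) (hr : 1 ≤ r) (hk : k ≤ t)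
    (α : Fin (l + t) → ZMod p) (hα : Function.Injective α)
    (γ : Fin k → ZMod p) (hγ : Function.Injective γ)
    (hdisj : Disjoint (Set.range γ) (Set.range α))
    (s : Fin l → Fin r → ZMod p) :
    (PMF.uniformOfFintype (Fin t → Fin r → ZMod p)).map
        (fun n (j : Fin k) => enc α (Fin.append s n) (γ j)) =
      PMF.uniformOfFintype (Fin k → Fin r → ZMod p) := by
  classical
  set T : (Fin t → Fin r → ZMod p) → (Fin k → Fin r → ZMod p) :=
    fun n (j : Fin k) => enc α (Fin.append s n) (γ j) with hT
  have happ : ∀ a b c : Fin t → Fin r → ZMod p,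
      Fin.append s (a - b + c) = Fin.append s a - Fin.append s b + Fin.append s c := by
    intro a b c
    funext o
    refine Fin.addCases (fun o0 => ?_) (fun o0 => ?_) o <;>
      simp [Fin.append_left, Fin.append_right]
  have hTaff : ∀ a b c, T (a - b + c) = T a - T b + T c := by
    intro a b c
    funext j
    simp only [hT, happ, Pi.add_apply, Pi.sub_apply]
    rw [enc_sub_add]
  have hTsurj : Function.Surjective T := by
    intro y
    have hvinj : Function.Injective
        (Sum.elim (fun a : Fin l => α (Fin.castAdd t a)) γ) := by
      rintro (a | a) (b | b) hab
      · simp only [Sum.elim_inl] at hab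
        exact congrArg _ (Fin.castAdd_injective l t (hα hab))
      · simp only [Sum.elim_inl, Sum.elim_inr] at hab
        exact absurd ⟨_, hab⟩ (Set.disjoint_left.mp hdisj ⟨b, rfl⟩)
      · simp only [Sum.elim_inl, Sum.elim_inr] at hab
        exact absurd ⟨_, hab.symm⟩ (Set.disjoint_left.mp hdisj ⟨a, rfl⟩)
      · simp only [Sum.elim_inr] at hab
        exact congrArg _ (hγ hab)
    have hvinjOn : Set.InjOn (Sum.elim (fun a : Fin l => α (Fin.castAdd t a)) γ)
        (Finset.univ : Finset (Fin l ⊕ Fin k)) := hvinj.injOn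
    set q : Fin r → Polynomial (ZMod p) :=
      fun i => Lagrange.interpolate Finset.univ
        (Sum.elim (fun a : Fin l => α (Fin.castAdd t a)) γ)
        (Sum.elim (fun a => s a i) (fun j => y j i)) with hq
    set n : Fin t → Fin r → ZMod p := fun b i => (q i).eval (α (Fin.natAdd l b)) with hn
    refine ⟨n, ?_⟩
    have hαinjOn : Set.InjOn α (Finset.univ : Finset (Fin (l + t))) := hα.injOn
    have hqeq : ∀ i : Fin r,
        q i = Lagrange.interpolate Finset.univ α (fun o => Fin.append s n o i) := by
      intro i
      apply Lagrange.eq_interpolate_of_eval_eq _ hαinjOn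
      · have h1 : ((q i).degree) < ((Finset.univ : Finset (Fin l ⊕ Fin k)).card : WithBot ℕ) :=
          Lagrange.degree_interpolate_lt _ hvinjOn
        refine lt_of_lt_of_le h1 ?_
        simp only [Finset.card_univ, Fintype.card_sum, Fintype.card_fin]
        exact_mod_cast Nat.add_le_add_left hk l
      · intro o _
        refine Fin.addCases (fun o0 => ?_) (fun o0 => ?_) o
        · have h2 : α (Fin.castAdd t o0)
              = Sum.elim (fun a : Fin l => α (Fin.castAdd t a)) γ (Sum.inl o0) := rfl
          rw [h2, Lagrange.eval_interpolate_at_node _ hvinjOn (Finset.mem_univ _)]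
          simp [Fin.append_left]
        · simp [hn, Fin.append_right]
    funext j
    show enc α (Fin.append s n) (γ j) = y j
    funext i
    rw [enc_eq_eval, ← hqeq i]
    have h3 : γ j = Sum.elim (fun a : Fin l => α (Fin.castAdd t a)) γ (Sum.inr j) := rfl
    rw [h3, hq, Lagrange.eval_interpolate_at_node _ hvinjOn (Finset.mem_univ _)]
    simp
  show PMF.map T _ = _
  apply pmf_map_uniform_of_card_fiber_eq
  intro b b'
  obtain ⟨nb, hnb⟩ := hTsurj b
  obtain ⟨nb', hnb'⟩ := hTsurj b'
  apply Finset.card_bij' (fun a _ => a - nb + nb') (fun a _ => a - nb' + nb)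
  · intro a ha
    simp only [Finset.mem_filter, Finset.mem_univ, true_and] at ha ⊢
    rw [hTaff, ha, hnb, hnb']
    abel
  · intro a ha
    simp only [Finset.mem_filter, Finset.mem_univ, true_and] at ha ⊢
    rw [hTaff, ha, hnb, hnb']
    abel
  · intro a _; abel
  · intro a _; abel
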